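/- arXiv:1609.05820 — 7 statements merged into one kernel-verified Lean document; each statement's English description precedes it below -/
import Mathlib

section
/- Let v ∈ R^m be a nonzero vector with largest entry v_(1) attained at coordinate j and second largest entry v_(2), with v_(1) > v_(2). If μ > 1/(v_(1) − v_(2)), then the Euclidean projection of μv onto the standard simplex Δ equals the basis vector e_j. -/
/-- The standard simplex in `ℝ^m` (with the Euclidean norm). -/
def stdSimplexE (m : ℕ) : Set (EuclideanSpace ℝ (Fin m)) :=
  {s | (∀ i, 0 ≤ s i) ∧ ∑ i, s i = 1}

/-- `p` is the Euclidean projection of `v` onto the standard simplex. -/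
def IsSimplexProj (m : ℕ) (v p : EuclideanSpace ℝ (Fin m)) : Prop :=
  p ∈ stdSimplexE m ∧ ∀ q ∈ stdSimplexE m, ‖v - p‖ ≤ ‖v - q‖

/-!
Write `w = μ v` and `e = e_j`. Since `μ (v_j - v_i) ≥ μ (v_(1) - v_(2)) > 1` for `i ≠ j`, the vector
`u = w - e` attains its maximum at `j`. For `q ∈ Δ` the weighted average `⟪u, q⟫` is then at most
`u_j = ⟪u, e⟫`, i.e. `⟪w - e, q - e⟫ ≤ 0`, which is the variational inequality characterising
`e` as the nearest point of `Δ` to `w`.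
-/

open Finset

theorem norm_sub_le_norm_sub_of_inner_le_zero {F : Type*} [NormedAddCommGroup F]
    [InnerProductSpace ℝ F] {x p q : F} (h : inner ℝ (x - p) (q - p) ≤ 0) :
    ‖x - p‖ ≤ ‖x - q‖ := by
  have hsq : ‖x - q‖ ^ 2 = ‖x - p‖ ^ 2 - 2 * inner ℝ (x - p) (q - p) + ‖q - p‖ ^ 2 := by
    rw [← norm_sub_sq_real, sub_sub_sub_cancel_right]
  have : ‖x - p‖ ^ 2 ≤ ‖x - q‖ ^ 2 := by nlinarith [sq_nonneg ‖q - p‖]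
  exact (sq_le_sq₀ (norm_nonneg _) (norm_nonneg _)).mp this

theorem single_mem_stdSimplexE {m : ℕ} (j : Fin m) :
    EuclideanSpace.single j (1 : ℝ) ∈ stdSimplexE m := by
  refine ⟨fun i => ?_, by simp⟩
  rw [PiLp.single_apply]
  split_ifs <;> norm_num

theorem inner_le_of_mem_stdSimplexE {m : ℕ} {u q : EuclideanSpace ℝ (Fin m)} {j : Fin m}
    (hq : q ∈ stdSimplexE m) (hu : ∀ i, u i ≤ u j) : inner ℝ u q ≤ u j :=
  calc inner ℝ u q = ∑ i, q i * u i := by simp [PiLp.inner_apply]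
    _ ≤ ∑ i, q i * u j := sum_le_sum fun i _ => mul_le_mul_of_nonneg_left (hu i) (hq.1 i)
    _ = u j := by rw [← sum_mul, hq.2, one_mul]

theorem isSimplexProj_single_of_add_one_le {m : ℕ} {w : EuclideanSpace ℝ (Fin m)} {j : Fin m}
    (hw : ∀ i ≠ j, w i + 1 ≤ w j) : IsSimplexProj m w (EuclideanSpace.single j 1) := by
  set e : EuclideanSpace ℝ (Fin m) := EuclideanSpace.single j 1
  refine ⟨single_mem_stdSimplexE j, fun q hq => norm_sub_le_norm_sub_of_inner_le_zero ?_⟩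
  have hmax : ∀ i, (w - e) i ≤ (w - e) j := by
    intro i
    by_cases hij : i = j
    · rw [hij]
    · simp only [e, PiLp.sub_apply, ne_eq, hij, not_false_eq_true, PiLp.single_eq_of_ne, sub_zero,
        PiLp.single_eq_same]
      linarith [hw i hij]
  have hej : inner ℝ (w - e) e = (w - e) j := by
    simp [e, EuclideanSpace.inner_single_right]
  rw [inner_sub_right, hej]
  linarith [inner_le_of_mem_stdSimplexE hq hmax]

theorem simplexProj_smul_eq_single_general
    (m : ℕ) (v : EuclideanSpace ℝ (Fin m)) (j : Fin m) (μ : ℝ)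
    (hne : (Finset.univ.erase j).Nonempty)
    (hgap : (Finset.univ.erase j).sup' hne (fun i => v i) < v j)
    (hμ : 1 / (v j - (Finset.univ.erase j).sup' hne (fun i => v i)) < μ) :
    IsSimplexProj m (μ • v) (EuclideanSpace.single j (1 : ℝ)) := by
  set M := (univ.erase j).sup' hne (fun i => v i)
  have hμgap : 1 < μ * (v j - M) := (div_lt_iff₀ (sub_pos.mpr hgap)).mp hμ
  refine isSimplexProj_single_of_add_one_le fun i hij => ?_
  have hvi : v i ≤ M := le_sup' (fun i => v i) (mem_erase.mpr ⟨hij, mem_univ i⟩)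
  have hμpos : 0 < μ := pos_of_mul_pos_left (one_pos.trans hμgap) (sub_pos.mpr hgap).le
  simp only [PiLp.smul_apply, smul_eq_mul]
  linarith [mul_le_mul_of_nonneg_left hvi hμpos.le, mul_sub μ (v j) M]

/-- Fact 3: if `v` is nonzero with strictly largest entry at coordinate `j`
and `μ > 1/(v_(1) − v_(2))`, then the projection of `μ v` onto the
standard simplex is the basis vector `e_j`. -/
theorem simplexProj_smul_eq_single
    (m : ℕ) (v : EuclideanSpace ℝ (Fin m)) (j : Fin m) (μ : ℝ)
    (hv : v ≠ 0)
    (hne : (Finset.univ.erase j).Nonempty)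
    (hmax : ∀ i, v i ≤ v j)
    (hgap : (Finset.univ.erase j).sup' hne (fun i => v i) < v j)
    (hμ : 1 / (v j - (Finset.univ.erase j).sup' hne (fun i => v i)) < μ) :
    IsSimplexProj m (μ • v) (EuclideanSpace.single j (1 : ℝ)) :=
  simplexProj_smul_eq_single_general m v j μ hne hgap hμ
end

section
/- Let P and Q be probability distributions on a finite set Y with P(y), Q(y) > 0 for all y. If max_y P(y)/Q(y) ≤ κ₀ and max_y Q(y)/P(y) ≤ κ₀, then E_{y∼P}[(log(P(y)/Q(y)))²] ≤ 2 κ₀² KL(Q‖P). -/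
/-!
Write `r = P / Q`. Then `∑ P (log (P / Q))² = E_Q[r (log r)²]` and, because `E_Q[r] = 1`,
`KL(Q‖P) = E_Q[r - 1 - log r]`, an expectation of nonnegative terms. So it suffices to compare
the integrands: `r (log r)² ≤ 2 max(1, r) (r - 1 - log r)` for every `r > 0`. Substituting
`r = e^{±u}` with `u ≥ 0`, this reduces to Taylor bounds on `exp`. Finally `κ₀ ≥ 1`, since
summing `P ≤ κ₀ Q` gives `1 ≤ κ₀`, so `max(1, r) ≤ κ₀ ≤ κ₀²`.
-/

/-- Kullback–Leibler divergence between two pmfs on a finite set. -/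
noncomputable def klDiv' {Y : Type*} [Fintype Y] (P Q : Y → ℝ) : ℝ :=
  ∑ y, P y * Real.log (P y / Q y)

open Real Finset

theorem sq_le_two_mul_sub_one_mul_exp_add_one {u : ℝ} (hu : 0 ≤ u) :
    u ^ 2 ≤ 2 * ((u - 1) * exp u + 1) := by
  rcases le_total u 1 with hu1 | hu1
  · have h := exp_bound' hu hu1 (n := 3) (by norm_num)
    norm_num [sum_range_succ, Nat.factorial] at h
    nlinarith [mul_le_mul_of_nonneg_left h (sub_nonneg.2 hu1), pow_nonneg hu 4]
  · have h := sum_le_exp_of_nonneg hu 4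
    norm_num [sum_range_succ, Nat.factorial] at h
    nlinarith [mul_le_mul_of_nonneg_left h (sub_nonneg.2 hu1), pow_nonneg hu 3, pow_nonneg hu 4]

theorem log_sq_le_of_one_le {r : ℝ} (hr : 1 ≤ r) : log r ^ 2 ≤ 2 * (r - 1 - log r) := by
  have h := quadratic_le_exp_of_nonneg (log_nonneg hr)
  rw [exp_log (by linarith)] at h
  linarith

theorem mul_log_sq_le_of_le_one {r : ℝ} (hr0 : 0 < r) (hr1 : r ≤ 1) :
    r * log r ^ 2 ≤ 2 * (r - 1 - log r) := by
  have h := sq_le_two_mul_sub_one_mul_exp_add_one (neg_nonneg.2 (log_nonpos hr0.le hr1))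
  rw [exp_neg, exp_log hr0] at h
  have := mul_le_mul_of_nonneg_left h hr0.le
  field_simp at this
  linarith [neg_sq (log r)]

theorem mul_log_sq_le {r : ℝ} (hr : 0 < r) :
    r * log r ^ 2 ≤ 2 * max 1 r * (r - 1 - log r) := by
  rcases le_total r 1 with hr1 | hr1
  · simpa [max_eq_left hr1] using mul_log_sq_le_of_le_one hr hr1
  · rw [max_eq_right hr1, mul_comm 2 r, mul_assoc]
    exact mul_le_mul_of_nonneg_left (log_sq_le_of_one_le hr1) hr.le

theorem mul_log_sq_le_of_le {r κ : ℝ} (hr : 0 < r) (hκ : 1 ≤ κ) (hrκ : r ≤ κ) :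
    r * log r ^ 2 ≤ 2 * κ * (r - 1 - log r) :=
  (mul_log_sq_le hr).trans <| mul_le_mul_of_nonneg_right (by gcongr; exact max_le hκ hrκ)
    (by linarith [log_le_sub_one_of_pos hr])

theorem one_le_of_div_le {Y : Type*} [Fintype Y] {P Q : Y → ℝ} {κ : ℝ} (hQ : ∀ y, 0 < Q y)
    (hPs : ∑ y, P y = 1) (hQs : ∑ y, Q y = 1) (hPQ : ∀ y, P y / Q y ≤ κ) : 1 ≤ κ :=
  calc 1 = ∑ y, P y := hPs.symm
    _ ≤ ∑ y, κ * Q y := sum_le_sum fun y _ => (div_le_iff₀ (hQ y)).1 (hPQ y)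
    _ = κ := by rw [← mul_sum, hQs, mul_one]

theorem klDiv'_eq_sum_mul {Y : Type*} [Fintype Y] {P Q : Y → ℝ} (hQ : ∀ y, Q y ≠ 0)
    (hPQ : ∑ y, P y = ∑ y, Q y) :
    klDiv' Q P = ∑ y, Q y * (P y / Q y - 1 - log (P y / Q y)) := by
  have hterm : ∀ y, Q y * (P y / Q y - 1 - log (P y / Q y)) =
      P y - Q y + Q y * log (Q y / P y) := by
    intro y
    rw [mul_sub, mul_sub, mul_div_cancel₀ _ (hQ y), ← inv_div, log_inv]
    ring
  simp only [hterm, sum_add_distrib, sum_sub_distrib, hPQ, sub_self, zero_add, klDiv']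

theorem second_moment_log_ratio_le_general {Y : Type*} [Fintype Y] (P Q : Y → ℝ) (κ₀ : ℝ)
    (hP : ∀ y, 0 < P y) (hQ : ∀ y, 0 < Q y)
    (hPs : ∑ y, P y = 1) (hQs : ∑ y, Q y = 1)
    (hPQ : ∀ y, P y / Q y ≤ κ₀) :
    ∑ y, P y * (Real.log (P y / Q y)) ^ 2 ≤ 2 * κ₀ ^ 2 * klDiv' Q P := by
  have hκ : 1 ≤ κ₀ := one_le_of_div_le hQ hPs hQs hPQ
  have hκκ : κ₀ ≤ κ₀ ^ 2 := by nlinarith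
  have hpt : ∀ y, P y * log (P y / Q y) ^ 2 ≤
      Q y * (2 * κ₀ ^ 2 * (P y / Q y - 1 - log (P y / Q y))) := by
    intro y
    have hr : 0 < P y / Q y := div_pos (hP y) (hQ y)
    have hgap : 0 ≤ P y / Q y - 1 - log (P y / Q y) := by linarith [log_le_sub_one_of_pos hr]
    calc P y * log (P y / Q y) ^ 2 = Q y * (P y / Q y * log (P y / Q y) ^ 2) := by
          rw [← mul_assoc, mul_div_cancel₀ _ (hQ y).ne']
      _ ≤ Q y * (2 * κ₀ * (P y / Q y - 1 - log (P y / Q y))) :=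
          mul_le_mul_of_nonneg_left (mul_log_sq_le_of_le hr hκ (hPQ y)) (hQ y).le
      _ ≤ Q y * (2 * κ₀ ^ 2 * (P y / Q y - 1 - log (P y / Q y))) := by
          gcongr; exact (hQ y).le
  calc ∑ y, P y * log (P y / Q y) ^ 2
      ≤ ∑ y, Q y * (2 * κ₀ ^ 2 * (P y / Q y - 1 - log (P y / Q y))) :=
        sum_le_sum fun y _ => hpt y
    _ = 2 * κ₀ ^ 2 * klDiv' Q P := by
      rw [klDiv'_eq_sum_mul (fun y => (hQ y).ne') (hPs.trans hQs.symm), mul_sum]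
      exact sum_congr rfl fun y _ => by ring

/-- If both likelihood ratios are bounded by `κ₀`, then
`E_{y∼P}[(log(P(y)/Q(y)))²] ≤ 2 κ₀² KL(Q‖P)`. -/
theorem second_moment_log_ratio_le {Y : Type*} [Fintype Y] (P Q : Y → ℝ) (κ₀ : ℝ)
    (hP : ∀ y, 0 < P y) (hQ : ∀ y, 0 < Q y)
    (hPs : ∑ y, P y = 1) (hQs : ∑ y, Q y = 1)
    (hPQ : ∀ y, P y / Q y ≤ κ₀) (hQP : ∀ y, Q y / P y ≤ κ₀) :
    ∑ y, P y * (Real.log (P y / Q y)) ^ 2 ≤ 2 * κ₀ ^ 2 * klDiv' Q P :=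
  second_moment_log_ratio_le_general P Q κ₀ hP hQ hPs hQs hPQ
end

section
/- Let P₁,…,Pₙ and Q₁,…,Qₙ be probability distributions on a finite set Y, and let y₁,…,yₙ be independent random variables with yᵢ ∼ Pᵢ. Then for any γ ≥ 0, P{ Σᵢ log(Pᵢ(yᵢ)/Qᵢ(yᵢ)) ≤ γ } ≤ exp( −Σᵢ H²(Pᵢ,Qᵢ) + γ/2 ), where H²(P,Q) = (1/2)Σ_y(√P(y)−√Q(y))². -/
/-!
Chernoff's bound with exponent `1/2`: on the event `S := ∑ᵢ log (Pᵢ(yᵢ)/Qᵢ(yᵢ)) ≤ γ` one has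
`1 ≤ exp ((γ - S)/2)`, and `exp (-S/2) ∏ᵢ Pᵢ(yᵢ) = ∏ᵢ √(Pᵢ(yᵢ) Qᵢ(yᵢ))`. Summing over all outcomes,
the product factorizes into `∏ᵢ ∑_y √(Pᵢ(y) Qᵢ(y)) = ∏ᵢ (1 - H²(Pᵢ,Qᵢ)) ≤ exp (-∑ᵢ H²(Pᵢ,Qᵢ))`.
-/

open scoped Classical

noncomputable def hellingerSq {Y : Type*} [Fintype Y] (P Q : Y → ℝ) : ℝ :=
  (1 / 2) * ∑ y, (Real.sqrt (P y) - Real.sqrt (Q y)) ^ 2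

open Finset Real

section Hellinger

variable {Y : Type*} [Fintype Y] {P Q : Y → ℝ}

theorem sum_sqrt_mul_eq_one_sub_hellingerSq (hP : ∀ y, 0 ≤ P y) (hQ : ∀ y, 0 ≤ Q y)
    (hPs : ∑ y, P y = 1) (hQs : ∑ y, Q y = 1) :
    ∑ y, √(P y * Q y) = 1 - hellingerSq P Q := by
  have hsq : ∀ y, (√(P y) - √(Q y)) ^ 2 = P y + Q y - 2 * √(P y * Q y) := fun y => by
    rw [sub_sq, sq_sqrt (hP y), sq_sqrt (hQ y), sqrt_mul (hP y)]
    ring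
  simp only [hellingerSq, hsq, sum_sub_distrib, sum_add_distrib, ← mul_sum, hPs, hQs]
  ring

theorem sum_sqrt_mul_le_exp_neg_hellingerSq (hP : ∀ y, 0 ≤ P y) (hQ : ∀ y, 0 ≤ Q y)
    (hPs : ∑ y, P y = 1) (hQs : ∑ y, Q y = 1) :
    ∑ y, √(P y * Q y) ≤ exp (-hellingerSq P Q) := by
  rw [sum_sqrt_mul_eq_one_sub_hellingerSq hP hQ hPs hQs]
  linarith [add_one_le_exp (-hellingerSq P Q)]

end Hellinger

theorem exp_half_log_div_mul_sqrt_mul {p q : ℝ} (hp : 0 < p) (hq : 0 < q) :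
    exp (log (p / q) / 2) * √(p * q) = p := by
  rw [exp_half, exp_log (div_pos hp hq), ← sqrt_mul (div_pos hp hq).le,
    div_mul_eq_mul_div, mul_div_assoc, mul_div_cancel_right₀ _ hq.ne', sqrt_mul_self hp.le]

theorem prod_eq_exp_half_sum_log_div_mul_prod_sqrt {ι : Type*} [Fintype ι] {p q : ι → ℝ}
    (hp : ∀ i, 0 < p i) (hq : ∀ i, 0 < q i) :
    ∏ i, p i = exp ((∑ i, log (p i / q i)) / 2) * ∏ i, √(p i * q i) := by
  rw [sum_div, exp_sum, ← prod_mul_distrib]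
  exact prod_congr rfl fun i _ => (exp_half_log_div_mul_sqrt_mul (hp i) (hq i)).symm

theorem ite_sum_log_div_le_le_exp_mul_prod_sqrt {ι : Type*} [Fintype ι] {p q : ι → ℝ}
    (hp : ∀ i, 0 < p i) (hq : ∀ i, 0 < q i) (γ : ℝ) :
    (if ∑ i, log (p i / q i) ≤ γ then ∏ i, p i else 0) ≤ exp (γ / 2) * ∏ i, √(p i * q i) := by
  split_ifs with hS
  · rw [prod_eq_exp_half_sum_log_div_mul_prod_sqrt hp hq]
    gcongr
  · positivity

theorem chernoff_hellinger_tail_general {Y : Type*} [Fintype Y] (n : ℕ)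
    (P Q : Fin n → Y → ℝ)
    (hP : ∀ i y, 0 < P i y) (hQ : ∀ i y, 0 < Q i y)
    (hPs : ∀ i, ∑ y, P i y = 1) (hQs : ∀ i, ∑ y, Q i y = 1)
    (γ : ℝ) :
    (∑ ω : Fin n → Y,
        if (∑ i, Real.log (P i (ω i) / Q i (ω i))) ≤ γ then ∏ i, P i (ω i) else 0)
      ≤ Real.exp (-(∑ i, hellingerSq (P i) (Q i)) + γ / 2) := by
  calc _ ≤ ∑ ω : Fin n → Y, exp (γ / 2) * ∏ i, √(P i (ω i) * Q i (ω i)) :=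
        sum_le_sum fun ω _ =>
          ite_sum_log_div_le_le_exp_mul_prod_sqrt (fun i => hP i _) (fun i => hQ i _) γ
    _ = exp (γ / 2) * ∏ i, ∑ y, √(P i y * Q i y) := by
        rw [← mul_sum, Fintype.prod_sum]
    _ ≤ exp (γ / 2) * ∏ i, exp (-hellingerSq (P i) (Q i)) := by
        gcongr with i
        exact sum_sqrt_mul_le_exp_neg_hellingerSq (fun y => (hP i y).le) (fun y => (hQ i y).le)
          (hPs i) (hQs i)
    _ = exp (-(∑ i, hellingerSq (P i) (Q i)) + γ / 2) := by
        rw [← exp_sum, ← exp_add, sum_neg_distrib, add_comm]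

/-- Chernoff-type bound: if `y₁,…,yₙ` are independent with `yᵢ ∼ Pᵢ`
(so the joint law of `(y₁,…,yₙ)` is the product pmf), then for any `γ ≥ 0`,
`P{ Σᵢ log(Pᵢ(yᵢ)/Qᵢ(yᵢ)) ≤ γ } ≤ exp(−Σᵢ H²(Pᵢ,Qᵢ) + γ/2)`. -/
theorem chernoff_hellinger_tail {Y : Type*} [Fintype Y] (n : ℕ)
    (P Q : Fin n → Y → ℝ)
    (hP : ∀ i y, 0 < P i y) (hQ : ∀ i y, 0 < Q i y)
    (hPs : ∀ i, ∑ y, P i y = 1) (hQs : ∀ i, ∑ y, Q i y = 1)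
    (γ : ℝ) (hγ : 0 ≤ γ) :
    (∑ ω : Fin n → Y,
        if (∑ i, Real.log (P i (ω i) / Q i (ω i))) ≤ γ then ∏ i, P i (ω i) else 0)
      ≤ Real.exp (-(∑ i, hellingerSq (P i) (Q i)) + γ / 2) :=
  chernoff_hellinger_tail_general n P Q hP hQ hPs hQs γ
end

section
/- Let P, Q be strictly positive probability distributions on a finite set Y with KL(P‖Q) ≤ ε for some 0 < ε < 1, and suppose min over y of both P(y) and Q(y) is bounded below by a positive constant c. Then Var_{y∼P}[log(P(y)/Q(y))] = 2·KL(P‖Q)·(1 + O(√ε)), i.e., there is a constant c₀ depending only on c such that |Var_{y∼P}[log(P(y)/Q(y))] − 2·KL(P‖Q)| ≤ c₀ √ε · KL(P‖Q). -/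
/-- Variance under `P` of the log-likelihood ratio `log(P(y)/Q(y))`. -/
noncomputable def varLogRatio {Y : Type*} [Fintype Y] (P Q : Y → ℝ) : ℝ :=
  ∑ y, P y * (Real.log (P y / Q y)) ^ 2 - (klDiv' P Q) ^ 2

/-!
Write `u = Q/P`, so that `u` ranges in `[c, 1/c]`. Since `𝔼_P[u - 1] = 0`, the divergence is
`KL = 𝔼_P[φ(u)]` with `φ(u) = u - 1 - log u ≥ 0`, and
`Var - 2 KL = 𝔼_P[log² u + 2 log u - 2(u - 1)] - KL²`.
The integrand vanishes to third order at `u = 1`, so it is `O(|u - 1|³)`. On the other hand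
`(u - 1)² = O(φ(u))`, and `P(y) φ(u(y)) ≤ KL` forces `|u(y) - 1| = O(√KL)` for every `y`.
Hence the expectation is `O(√KL · KL)`, while `KL² ≤ ε KL ≤ √ε KL`.
-/

open Real Finset

namespace Real

lemma sub_one_sub_log_nonneg {u : ℝ} (hu : 0 < u) : 0 ≤ u - 1 - log u := by
  linarith [log_le_sub_one_of_pos hu]

lemma sub_one_sub_log_le_sq_div {u : ℝ} (hu : 0 < u) : u - 1 - log u ≤ (u - 1) ^ 2 / u := by
  have h := one_sub_inv_le_log_of_pos hu
  have : (u - 1) ^ 2 / u = u - 1 - (1 - u⁻¹) := by field_simp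
  linarith

lemma sub_one_sub_log_le_sq_div_of_le {u c : ℝ} (hc : 0 < c) (hcu : c ≤ u) :
    u - 1 - log u ≤ (u - 1) ^ 2 / c :=
  (sub_one_sub_log_le_sq_div (hc.trans_le hcu)).trans
    (div_le_div_of_nonneg_left (sq_nonneg _) hc hcu)

lemma sq_sub_one_le_mul_sub_one_sub_log {u : ℝ} (hu : 0 < u) :
    (u - 1) ^ 2 ≤ 2 * (u + 1) * (u - 1 - log u) := by
  set s := √u
  have hs : s ^ 2 = u := sq_sqrt hu.le
  -- `log u = 2 log √u ≤ 2 (√u - 1)`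
  have hφ : (s - 1) ^ 2 ≤ u - 1 - log u := by
    have hlog : log u = 2 * log s := by rw [log_sqrt hu.le]; ring
    have := log_le_sub_one_of_pos (sqrt_pos.2 hu)
    nlinarith
  have hs1 : (s + 1) ^ 2 ≤ 2 * (u + 1) := by nlinarith [sq_nonneg (s - 1)]
  calc (u - 1) ^ 2 = (s - 1) ^ 2 * (s + 1) ^ 2 := by rw [← hs]; ring
    _ ≤ (u - 1 - log u) * (2 * (u + 1)) :=
        mul_le_mul hφ hs1 (sq_nonneg _) ((sq_nonneg _).trans hφ)
    _ = 2 * (u + 1) * (u - 1 - log u) := by ring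

lemma sq_sub_one_le_four_div_mul_sub_one_sub_log {u c : ℝ} (hu : 0 < u) (hc : 0 < c)
    (hc1 : c ≤ 1) (huc : u ≤ 1 / c) : (u - 1) ^ 2 ≤ 4 / c * (u - 1 - log u) := by
  have hφ0 := sub_one_sub_log_nonneg hu
  have hinv : 1 ≤ 1 / c := by rw [le_div_iff₀ hc]; linarith
  calc (u - 1) ^ 2 ≤ 2 * (u + 1) * (u - 1 - log u) := sq_sub_one_le_mul_sub_one_sub_log hu
    _ ≤ 4 / c * (u - 1 - log u) := by
        gcongr
        calc 2 * (u + 1) ≤ 2 * (1 / c + 1 / c) := by gcongr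
          _ = 4 / c := by ring

lemma abs_log_le_abs_sub_one_div {u c : ℝ} (hc : 0 < c) (hc1 : c ≤ 1) (hcu : c ≤ u) :
    |log u| ≤ |u - 1| / c := by
  have hu := hc.trans_le hcu
  have hd : |u - 1| ≤ |u - 1| / c := le_div_self (abs_nonneg _) hc hc1
  have hlow : -(|u - 1| / c) ≤ (u - 1) / u := by
    rw [neg_le, ← neg_div, div_le_div_iff₀ hu hc]
    nlinarith [neg_abs_le (u - 1), abs_nonneg (u - 1)]
  have hinv : 1 - u⁻¹ = (u - 1) / u := by field_simp
  rw [abs_le]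
  constructor
  · linarith [one_sub_inv_le_log_of_pos hu]
  · linarith [log_le_sub_one_of_pos hu, le_abs_self (u - 1)]

lemma abs_log_sub_add_sq_div_two_le {u c : ℝ} (hc : 0 < c) (hc1 : c ≤ 1) (hcu : c ≤ u) :
    |log u - (u - 1) + (u - 1) ^ 2 / 2| ≤ 3 / c * |u - 1| ^ 3 := by
  have hd := abs_nonneg (u - 1)
  have hd3 := pow_nonneg hd 3
  -- near `u = 1` the Taylor series of `log` converges; away from it `(u - 1)² ≤ 2 |u - 1|³`
  rcases le_or_gt |u - 1| (1 / 2) with hsmall | hlarge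
  · have h := abs_log_sub_add_sum_range_le (x := 1 - u) (by rw [abs_sub_comm]; linarith) 2
    have hsum : ∑ i ∈ range 2, (1 - u) ^ (i + 1) / (i + 1) + log (1 - (1 - u))
        = log u - (u - 1) + (u - 1) ^ 2 / 2 := by
      norm_num [sum_range_succ]; ring
    rw [hsum, abs_sub_comm] at h
    have hrem : |u - 1| ^ 3 / (1 - |u - 1|) ≤ 2 * |u - 1| ^ 3 := by
      rw [div_le_iff₀ (by linarith)]
      nlinarith
    have hc3 : 3 ≤ 3 / c := le_div_self (by norm_num) hc hc1
    nlinarith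
  · have hφ0 := sub_one_sub_log_nonneg (hc.trans_le hcu)
    have hφ := sub_one_sub_log_le_sq_div_of_le hc hcu
    have hsq : (u - 1) ^ 2 ≤ 2 * |u - 1| ^ 3 := by rw [← sq_abs]; nlinarith
    have hinv : 1 ≤ 1 / c := by rw [le_div_iff₀ hc]; linarith
    have hφ' : u - 1 - log u ≤ 2 / c * |u - 1| ^ 3 := by
      calc u - 1 - log u ≤ (u - 1) ^ 2 / c := hφ
        _ ≤ 2 * |u - 1| ^ 3 / c := by gcongr
        _ = 2 / c * |u - 1| ^ 3 := by ring
    have hsplit : 3 / c * |u - 1| ^ 3 = 2 / c * |u - 1| ^ 3 + 1 / c * |u - 1| ^ 3 := by ring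
    have hcube : |u - 1| ^ 3 ≤ 1 / c * |u - 1| ^ 3 := le_mul_of_one_le_left hd3 hinv
    rw [abs_le]
    constructor <;> nlinarith

lemma abs_log_sq_add_two_mul_log_sub_le {u c : ℝ} (hc : 0 < c) (hc1 : c ≤ 1) (hcu : c ≤ u) :
    |log u ^ 2 + 2 * log u - 2 * (u - 1)| ≤ 8 / c ^ 2 * |u - 1| ^ 3 := by
  have hd := abs_nonneg (u - 1)
  have hφ0 := sub_one_sub_log_nonneg (hc.trans_le hcu)
  have hφ := sub_one_sub_log_le_sq_div_of_le hc hcu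
  have hlog := abs_log_le_abs_sub_one_div hc hc1 hcu
  have hcubic := abs_log_sub_add_sq_div_two_le hc hc1 hcu
  have hprod : |(log u - (u - 1)) * (log u + (u - 1))| ≤ (u - 1) ^ 2 / c * (2 * (|u - 1| / c)) := by
    rw [abs_mul, abs_of_nonpos (by linarith)]
    refine mul_le_mul (by linarith) ?_ (abs_nonneg _) (by positivity)
    linarith [abs_add_le (log u) (u - 1), le_div_self hd hc hc1]
  have hprod' : (u - 1) ^ 2 / c * (2 * (|u - 1| / c)) = 2 / c ^ 2 * |u - 1| ^ 3 := by
    rw [← sq_abs]; field_simp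
  calc |log u ^ 2 + 2 * log u - 2 * (u - 1)|
      = |(log u - (u - 1)) * (log u + (u - 1)) + 2 * (log u - (u - 1) + (u - 1) ^ 2 / 2)| := by
        ring_nf
    _ ≤ 2 / c ^ 2 * |u - 1| ^ 3 + 2 * (3 / c * |u - 1| ^ 3) := by
        refine (abs_add_le _ _).trans (add_le_add (hprod.trans_eq hprod') ?_)
        rw [abs_mul, abs_two]; gcongr
    _ = 2 / c ^ 2 * |u - 1| ^ 3 + 6 / c * |u - 1| ^ 3 := by ring
    _ ≤ 2 / c ^ 2 * |u - 1| ^ 3 + 6 / c ^ 2 * |u - 1| ^ 3 := by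
        gcongr
        exact pow_le_of_le_one hc.le hc1 two_ne_zero
    _ = 8 / c ^ 2 * |u - 1| ^ 3 := by ring

end Real

section Divergence

variable {Y : Type*} [Fintype Y] {P Q : Y → ℝ} {c : ℝ}

lemma le_one_of_sum_eq_one (hP : ∀ y, 0 ≤ P y) (hP1 : ∑ y, P y = 1) (y : Y) : P y ≤ 1 :=
  hP1 ▸ single_le_sum (fun i _ => hP i) (mem_univ y)

lemma klDiv'_eq_sum_mul_sub_one_sub_log (hP : ∀ y, 0 < P y) (hP1 : ∑ y, P y = 1)
    (hQ1 : ∑ y, Q y = 1) :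
    klDiv' P Q = ∑ y, P y * (Q y / P y - 1 - log (Q y / P y)) := by
  have hmean : ∑ y, P y * (Q y / P y - 1) = 0 := by
    simp only [mul_sub, mul_div_cancel₀ _ (hP _).ne', mul_one]
    rw [sum_sub_distrib, hP1, hQ1, sub_self]
  rw [klDiv']
  simp only [mul_sub (P _) (Q _ / P _ - 1), sum_sub_distrib, hmean, zero_sub, ← sum_neg_distrib,
    ← mul_neg, ← log_inv, inv_div]

lemma klDiv'_nonneg (hP : ∀ y, 0 < P y) (hQ : ∀ y, 0 < Q y) (hP1 : ∑ y, P y = 1)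
    (hQ1 : ∑ y, Q y = 1) : 0 ≤ klDiv' P Q := by
  rw [klDiv'_eq_sum_mul_sub_one_sub_log hP hP1 hQ1]
  exact sum_nonneg fun y _ => mul_nonneg (hP y).le (sub_one_sub_log_nonneg (div_pos (hQ y) (hP y)))

lemma varLogRatio_sub_two_mul_klDiv' (hP : ∀ y, 0 < P y) (hP1 : ∑ y, P y = 1)
    (hQ1 : ∑ y, Q y = 1) :
    varLogRatio P Q - 2 * klDiv' P Q =
      ∑ y, P y * (log (Q y / P y) ^ 2 + 2 * log (Q y / P y) - 2 * (Q y / P y - 1))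
        - klDiv' P Q ^ 2 := by
  have hsum : ∑ y, P y * (log (Q y / P y) ^ 2 + 2 * log (Q y / P y) - 2 * (Q y / P y - 1)) =
      ∑ y, P y * log (P y / Q y) ^ 2 - 2 * ∑ y, P y * (Q y / P y - 1 - log (Q y / P y)) := by
    rw [mul_sum, ← sum_sub_distrib]
    refine sum_congr rfl fun y _ => ?_
    rw [← inv_div, log_inv]
    ring
  rw [hsum, ← klDiv'_eq_sum_mul_sub_one_sub_log hP hP1 hQ1, varLogRatio]
  ring

lemma mul_sub_one_sub_log_le_klDiv' (hP : ∀ y, 0 < P y) (hQ : ∀ y, 0 < Q y)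
    (hP1 : ∑ y, P y = 1) (hQ1 : ∑ y, Q y = 1) (y : Y) :
    P y * (Q y / P y - 1 - log (Q y / P y)) ≤ klDiv' P Q := by
  rw [klDiv'_eq_sum_mul_sub_one_sub_log hP hP1 hQ1]
  exact single_le_sum (fun i _ => mul_nonneg (hP i).le
    (sub_one_sub_log_nonneg (div_pos (hQ i) (hP i)))) (mem_univ y)

lemma div_mem_Icc_of_sum_eq_one (hc : 0 < c) (hPc : ∀ y, c ≤ P y) (hQc : ∀ y, c ≤ Q y)
    (hP1 : ∑ y, P y = 1) (hQ1 : ∑ y, Q y = 1) (y : Y) : Q y / P y ∈ Set.Icc c (1 / c) := by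
  have hP := hc.trans_le (hPc y)
  have hP_le := le_one_of_sum_eq_one (fun i => hc.le.trans (hPc i)) hP1 y
  have hQ_le := le_one_of_sum_eq_one (fun i => hc.le.trans (hQc i)) hQ1 y
  constructor
  · rw [le_div_iff₀ hP]; nlinarith [hQc y]
  · rw [div_le_div_iff₀ hP hc]; nlinarith [hPc y]

lemma abs_div_sub_one_le_sqrt_klDiv' (hc : 0 < c) (hPc : ∀ y, c ≤ P y) (hQc : ∀ y, c ≤ Q y)
    (hP1 : ∑ y, P y = 1) (hQ1 : ∑ y, Q y = 1) (y : Y) :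
    |Q y / P y - 1| ≤ 2 / c * √(klDiv' P Q) := by
  have hP : ∀ y, 0 < P y := fun y => hc.trans_le (hPc y)
  have hQ : ∀ y, 0 < Q y := fun y => hc.trans_le (hQc y)
  have hup := (div_mem_Icc_of_sum_eq_one hc hPc hQc hP1 hQ1 y).2
  have hc1 : c ≤ 1 := (hPc y).trans (le_one_of_sum_eq_one (fun i => (hP i).le) hP1 y)
  have hKL0 := klDiv'_nonneg hP hQ hP1 hQ1
  have hφ : Q y / P y - 1 - log (Q y / P y) ≤ klDiv' P Q / c := by
    rw [le_div_iff₀ hc, mul_comm]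
    exact (mul_le_mul_of_nonneg_right (hPc y) (sub_one_sub_log_nonneg (div_pos (hQ y) (hP y)))).trans
      (mul_sub_one_sub_log_le_klDiv' hP hQ hP1 hQ1 y)
  refine abs_le_of_sq_le_sq ?_ (by positivity)
  calc (Q y / P y - 1) ^ 2 ≤ 4 / c * (Q y / P y - 1 - log (Q y / P y)) :=
        sq_sub_one_le_four_div_mul_sub_one_sub_log (div_pos (hQ y) (hP y)) hc hc1 hup
    _ ≤ 4 / c * (klDiv' P Q / c) := by gcongr
    _ = (2 / c * √(klDiv' P Q)) ^ 2 := by rw [mul_pow, sq_sqrt hKL0]; ring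

lemma abs_sum_mul_log_sq_add_two_mul_log_sub_le (hc : 0 < c) (hPc : ∀ y, c ≤ P y)
    (hQc : ∀ y, c ≤ Q y) (hP1 : ∑ y, P y = 1) (hQ1 : ∑ y, Q y = 1) :
    |∑ y, P y * (log (Q y / P y) ^ 2 + 2 * log (Q y / P y) - 2 * (Q y / P y - 1))| ≤
      64 / c ^ 4 * √(klDiv' P Q) * klDiv' P Q := by
  have hP : ∀ y, 0 < P y := fun y => hc.trans_le (hPc y)
  have hQ : ∀ y, 0 < Q y := fun y => hc.trans_le (hQc y)
  have hpointwise (y : Y) :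
      |log (Q y / P y) ^ 2 + 2 * log (Q y / P y) - 2 * (Q y / P y - 1)| ≤
        64 / c ^ 4 * √(klDiv' P Q) * (Q y / P y - 1 - log (Q y / P y)) := by
    set u := Q y / P y
    have hu : 0 < u := div_pos (hQ y) (hP y)
    obtain ⟨hlow, hup⟩ := div_mem_Icc_of_sum_eq_one hc hPc hQc hP1 hQ1 y
    have hc1 : c ≤ 1 := (hPc y).trans (le_one_of_sum_eq_one (fun i => (hP i).le) hP1 y)
    calc |log u ^ 2 + 2 * log u - 2 * (u - 1)| ≤ 8 / c ^ 2 * (|u - 1| * (u - 1) ^ 2) := by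
          rw [← sq_abs (u - 1), ← pow_succ']
          exact abs_log_sq_add_two_mul_log_sub_le hc hc1 hlow
      _ ≤ 8 / c ^ 2 * (2 / c * √(klDiv' P Q) * (4 / c * (u - 1 - log u))) := by
          gcongr
          · exact abs_div_sub_one_le_sqrt_klDiv' hc hPc hQc hP1 hQ1 y
          · exact sq_sub_one_le_four_div_mul_sub_one_sub_log hu hc hc1 hup
      _ = 64 / c ^ 4 * √(klDiv' P Q) * (u - 1 - log u) := by ring
  calc _ ≤ ∑ y, P y * |log (Q y / P y) ^ 2 + 2 * log (Q y / P y) - 2 * (Q y / P y - 1)| := by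
        refine (abs_sum_le_sum_abs _ _).trans_eq (sum_congr rfl fun y _ => ?_)
        rw [abs_mul, abs_of_pos (hP y)]
    _ ≤ ∑ y, 64 / c ^ 4 * √(klDiv' P Q) * (P y * (Q y / P y - 1 - log (Q y / P y))) := by
        refine sum_le_sum fun y _ => ?_
        rw [mul_left_comm]
        exact mul_le_mul_of_nonneg_left (hpointwise y) (hP y).le
    _ = 64 / c ^ 4 * √(klDiv' P Q) * klDiv' P Q := by
        rw [← mul_sum, ← klDiv'_eq_sum_mul_sub_one_sub_log hP hP1 hQ1]

end Divergence

/-- If `P, Q` are pmfs bounded below by `c > 0` and `KL(P‖Q) ≤ ε < 1`, then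
`Var_{y∼P}[log(P(y)/Q(y))] = 2 KL(P‖Q) (1 + O(√ε))`, where the implicit
constant depends only on `c`. -/
theorem var_log_ratio_eq_two_kl (c : ℝ) (hc : 0 < c) :
    ∃ c₀ : ℝ, 0 < c₀ ∧
      ∀ (Y : Type) [Fintype Y] (P Q : Y → ℝ) (ε : ℝ),
        (∀ y, c ≤ P y) → (∀ y, c ≤ Q y) →
        (∑ y, P y = 1) → (∑ y, Q y = 1) →
        0 < ε → ε < 1 → klDiv' P Q ≤ ε →
        |varLogRatio P Q - 2 * klDiv' P Q| ≤ c₀ * Real.sqrt ε * klDiv' P Q := by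
  refine ⟨64 / c ^ 4 + 1, by positivity, ?_⟩
  intro Y _ P Q ε hPc hQc hP1 hQ1 hε0 hε1 hKLε
  have hP : ∀ y, 0 < P y := fun y => hc.trans_le (hPc y)
  have hKL0 := klDiv'_nonneg hP (fun y => hc.trans_le (hQc y)) hP1 hQ1
  have hKL_le_sqrt : klDiv' P Q ≤ √ε :=
    hKLε.trans ((le_sqrt hε0.le hε0.le).2 (by nlinarith))
  rw [varLogRatio_sub_two_mul_klDiv' hP hP1 hQ1]
  calc _ ≤ 64 / c ^ 4 * √(klDiv' P Q) * klDiv' P Q + klDiv' P Q ^ 2 := by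
        refine (abs_sub _ _).trans (add_le_add ?_ (abs_sq _).le)
        exact abs_sum_mul_log_sq_add_two_mul_log_sub_le hc hPc hQc hP1 hQ1
    _ ≤ 64 / c ^ 4 * √ε * klDiv' P Q + √ε * klDiv' P Q := by
        gcongr
        rw [sq]
        exact mul_le_mul_of_nonneg_right hKL_le_sqrt hKL0
    _ = (64 / c ^ 4 + 1) * √ε * klDiv' P Q := by ring
end

section
/- Let P and Q be strictly positive probability distributions on a finite set Y with both likelihood ratios bounded: max_y P(y)/Q(y) ≤ R and max_y Q(y)/P(y) ≤ R. Then (4 − log R)·H²(P,Q) ≤ KL(P‖Q) ≤ (4 + 2 log R)·H²(P,Q). -/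
open Real Finset

lemma monotoneOn_add_one_mul_log_sub_two_mul_sub_one :
    MonotoneOn (fun t : ℝ => (t + 1) * log t - 2 * (t - 1)) (Set.Ioi 0) := by
  have hderiv : ∀ t : ℝ, 0 < t →
      HasDerivAt (fun t : ℝ => (t + 1) * log t - 2 * (t - 1)) (log t + (t + 1) * t⁻¹ - 2) t :=
    fun t ht => ((((hasDerivAt_id t).add_const 1).mul (hasDerivAt_log ht.ne')).sub
      (((hasDerivAt_id t).sub_const 1).const_mul 2)).congr_deriv (by simp)
  refine monotoneOn_of_deriv_nonneg (convex_Ioi 0)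
    (fun t ht => (hderiv t ht).continuousAt.continuousWithinAt)
    (fun t ht => (hderiv t (interior_subset ht)).differentiableAt.differentiableWithinAt)
    fun t ht => ?_
  rw [interior_Ioi] at ht
  rw [(hderiv t ht).deriv, add_mul, mul_inv_cancel₀ ht.ne', one_mul]
  linarith [one_sub_inv_le_log_of_pos ht]

lemma two_mul_sub_one_le_add_one_mul_log {t : ℝ} (ht : 1 ≤ t) :
    2 * (t - 1) ≤ (t + 1) * log t := by
  have := monotoneOn_add_one_mul_log_sub_two_mul_sub_one (by norm_num : (1 : ℝ) ∈ Set.Ioi 0)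
    (show t ∈ Set.Ioi 0 from zero_lt_one.trans_le ht) ht
  norm_num at this
  linarith

lemma add_one_mul_log_le_two_mul_sub_one {t : ℝ} (h0 : 0 < t) (ht : t ≤ 1) :
    (t + 1) * log t ≤ 2 * (t - 1) := by
  have := monotoneOn_add_one_mul_log_sub_two_mul_sub_one h0
    (by norm_num : (1 : ℝ) ∈ Set.Ioi 0) ht
  norm_num at this
  linarith

lemma two_mul_mul_log_le_sq_sub_one {t : ℝ} (ht : 1 ≤ t) : 2 * t * log t ≤ t ^ 2 - 1 := by
  have h0 : 0 < t := zero_lt_one.trans_le ht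
  have h := self_le_sinh_iff.mpr (log_nonneg ht)
  rw [sinh_log h0, le_div_iff₀ two_pos] at h
  have : t * t⁻¹ = 1 := mul_inv_cancel₀ h0.ne'
  nlinarith

lemma sq_sub_one_le_two_mul_mul_log {t : ℝ} (h0 : 0 < t) (ht : t ≤ 1) :
    t ^ 2 - 1 ≤ 2 * t * log t := by
  have h := sinh_le_self_iff.mpr (log_nonpos h0.le ht)
  rw [sinh_log h0, div_le_iff₀ two_pos] at h
  have : t * t⁻¹ = 1 := mul_inv_cancel₀ h0.ne'
  nlinarith

lemma two_mul_sq_mul_log_sub_sq_add_one_le {t : ℝ} (ht : 0 < t) :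
    2 * t ^ 2 * log t - t ^ 2 + 1 ≤ (2 + 2 * |log t|) * (t - 1) ^ 2 := by
  rcases le_total 1 t with h1 | h1
  · rw [abs_of_nonneg (log_nonneg h1)]
    nlinarith [mul_le_mul_of_nonneg_right (two_mul_mul_log_le_sq_sub_one h1)
      (by linarith : (0 : ℝ) ≤ 2 * t - 1), mul_nonneg (sub_nonneg.2 h1) (sq_nonneg (t - 1))]
  · rw [abs_of_nonpos (log_nonpos ht.le h1)]
    nlinarith [mul_le_mul_of_nonneg_right (add_one_mul_log_le_two_mul_sub_one ht h1)
      (by nlinarith : (0 : ℝ) ≤ 2 * t ^ 2 - 2 * t + 1),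
      mul_nonneg (sub_nonneg.2 h1) (sq_nonneg (t - 1))]

lemma le_two_mul_sq_mul_log_sub_sq_add_one {t : ℝ} (ht : 0 < t) :
    (2 - |log t|) * (t - 1) ^ 2 ≤ 2 * t ^ 2 * log t - t ^ 2 + 1 := by
  rcases le_total 1 t with h1 | h1
  · rw [abs_of_nonneg (log_nonneg h1)]
    nlinarith [mul_le_mul_of_nonneg_right (two_mul_sub_one_le_add_one_mul_log h1)
      (by nlinarith : (0 : ℝ) ≤ 3 * t ^ 2 - 2 * t + 1),
      mul_nonneg (sub_nonneg.2 h1) (sq_nonneg (t - 1))]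
  · rw [abs_of_nonpos (log_nonpos ht.le h1)]
    -- the coefficient `t ^ 2 + 2 * t - 1` of `log t` changes sign at `t = √2 - 1`
    rcases le_total 0 (t ^ 2 + 2 * t - 1) with h2 | h2
    · nlinarith [mul_le_mul_of_nonneg_right (sq_sub_one_le_two_mul_mul_log ht h1) h2,
        mul_nonneg (sub_nonneg.2 h1) (sq_nonneg (t - 1))]
    · nlinarith [mul_le_mul_of_nonpos_right (log_le_sub_one_of_pos ht) h2,
        mul_nonneg (sq_nonneg (t - 1)) ht.le]

lemma mul_log_div_sub_add_sandwich {p q s : ℝ} (hp : 0 < p) (hq : 0 < q)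
    (hs : |log (p / q)| ≤ s) :
    (4 - s) * (1 / 2 * (√p - √q) ^ 2) ≤ p * log (p / q) - p + q ∧
      p * log (p / q) - p + q ≤ (4 + 2 * s) * (1 / 2 * (√p - √q) ^ 2) := by
  obtain ⟨t, ht, rfl⟩ : ∃ t, 0 < t ∧ p = q * t ^ 2 :=
    ⟨√(p / q), by positivity, by rw [sq_sqrt (by positivity)]; field_simp⟩
  have hlog : log (q * t ^ 2 / q) = 2 * log t := by
    rw [mul_div_cancel_left₀ _ hq.ne', log_pow]; norm_num
  have hsq : (√(q * t ^ 2) - √q) ^ 2 = q * (t - 1) ^ 2 := by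
    rw [sqrt_mul hq.le, sqrt_sq ht.le]
    linear_combination (t - 1) ^ 2 * sq_sqrt hq.le
  rw [hlog, abs_mul, abs_two] at hs
  rw [hlog, hsq]
  have hmass : 0 ≤ q * (t - 1) ^ 2 := by positivity
  constructor
  · nlinarith [mul_le_mul_of_nonneg_left (le_two_mul_sq_mul_log_sub_sq_add_one ht) hq.le,
      mul_le_mul_of_nonneg_right hs hmass]
  · nlinarith [mul_le_mul_of_nonneg_left (two_mul_sq_mul_log_sub_sq_add_one_le ht) hq.le,
      mul_le_mul_of_nonneg_right hs hmass]

lemma abs_log_div_le_log {p q R : ℝ} (hp : 0 < p) (hq : 0 < q) (hpq : p / q ≤ R)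
    (hqp : q / p ≤ R) : |log (p / q)| ≤ log R := by
  refine abs_le.mpr ⟨?_, log_le_log (div_pos hp hq) hpq⟩
  rw [neg_le, ← log_inv, inv_div]
  exact log_le_log (div_pos hq hp) hqp

lemma klDiv'_eq_sum_mul_log_div_sub_add {Y : Type*} [Fintype Y] {P Q : Y → ℝ}
    (hPs : ∑ y, P y = 1) (hQs : ∑ y, Q y = 1) :
    klDiv' P Q = ∑ y, (P y * log (P y / Q y) - P y + Q y) := by
  rw [klDiv', sum_add_distrib, sum_sub_distrib, hPs, hQs, sub_add_cancel]

theorem kl_hellinger_sandwich_general {Y : Type*} [Fintype Y] (P Q : Y → ℝ) (R : ℝ)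
    (hP : ∀ y, 0 < P y) (hQ : ∀ y, 0 < Q y)
    (hPs : ∑ y, P y = 1) (hQs : ∑ y, Q y = 1)
    (hPQ : ∀ y, P y / Q y ≤ R) (hQP : ∀ y, Q y / P y ≤ R) :
    (4 - Real.log R) * hellingerSq P Q ≤ klDiv' P Q ∧
      klDiv' P Q ≤ (4 + 2 * Real.log R) * hellingerSq P Q := by
  have hterm y := mul_log_div_sub_add_sandwich (hP y) (hQ y)
    (abs_log_div_le_log (hP y) (hQ y) (hPQ y) (hQP y))
  simp only [klDiv'_eq_sum_mul_log_div_sub_add hPs hQs, hellingerSq, mul_sum]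
  exact ⟨sum_le_sum fun y _ => (hterm y).1, sum_le_sum fun y _ => (hterm y).2⟩

/-- If both likelihood ratios of the strictly positive pmfs `P, Q` are bounded
by `R`, then `(4 − log R) H²(P,Q) ≤ KL(P‖Q) ≤ (4 + 2 log R) H²(P,Q)`. -/
theorem kl_hellinger_sandwich {Y : Type*} [Fintype Y] (P Q : Y → ℝ) (R : ℝ)
    (hP : ∀ y, 0 < P y) (hQ : ∀ y, 0 < Q y)
    (hPs : ∑ y, P y = 1) (hQs : ∑ y, Q y = 1)
    (hR : 1 ≤ R)
    (hPQ : ∀ y, P y / Q y ≤ R) (hQP : ∀ y, Q y / P y ≤ R) :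
    (4 - Real.log R) * hellingerSq P Q ≤ klDiv' P Q ∧
      klDiv' P Q ≤ (4 + 2 * Real.log R) * hellingerSq P Q :=
  kl_hellinger_sandwich_general P Q R hP hQ hPs hQs hPQ hQP
end

section
/- Fix m ≥ 2 and let P₀ be a probability distribution on Z/mZ with m·min_y P₀(y) bounded below by a positive constant. For 0 ≤ l < m, define Pₗ(y) := P₀(y − l mod m). If KL(P₀‖P₁) = min_{1 ≤ l < m} KL(P₀‖Pₗ) (or KL(P₀‖P_{m−1}) attains this minimum), then there exists a constant C (depending only on m and the lower bound on P₀) such that max_{1 ≤ l < m} KL(P₀‖Pₗ) ≤ C · min_{1 ≤ l < m} KL(P₀‖Pₗ). -/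
/-!
Write `K = KL(P₀‖P_s)` for the minimising shift `s = ±1`. Termwise, `p log (p/q) - (p - q)`
lies between `(p - q)²/2` (for `p, q ≤ 1`) and `(p - q)²/q`, and the linear terms sum to `0`
over a shift. The lower bound gives `|P₀ y - P₀ (y - s)| ≤ √(2K)` for every `y`; since `s`
generates `ZMod m`, telescoping along at most `m` steps of `s` gives
`|P₀ y - P₀ (y - l)| ≤ m √(2K)` for every `l`, and the upper bound with `P₀ ≥ c/m` turns this
into `KL(P₀‖P_l) ≤ (2 m⁴ / c) K`.
-/

/-- KL divergence between a pmf `P₀` on `ZMod m` and its `l`-shifted version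
`Pₗ(y) = P₀(y − l)`. -/
noncomputable def klShift {m : ℕ} [NeZero m] (P₀ : ZMod m → ℝ) (l : ZMod m) : ℝ :=
  ∑ y, P₀ y * Real.log (P₀ y / P₀ (y - l))

open Real Set

lemma hasDerivAt_mul_log_div_sub_sub_sq {p x : ℝ} (hx : 0 < x) :
    HasDerivAt (fun x => p * (log p - log x) - (p - x) - (p - x) ^ 2 / 2)
      ((x - p) * (1 - x) / x) x := by
  have hlin : HasDerivAt (fun x => p - x) (-1) x := by
    simpa using (hasDerivAt_id x).const_sub p
  refine ((((hasDerivAt_log hx.ne').const_sub (log p)).const_mul p).sub hlin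
    |>.sub ((hlin.pow 2).div_const 2)).congr_deriv ?_
  field_simp
  ring

/- As a function of `q ∈ (0, 1]`, the difference of the two sides has derivative
`(q - p) * (1 - q) / q`, so it is smallest, namely `0`, at `q = p`. -/
lemma sq_sub_div_two_le_mul_log_div_sub_sub {p q : ℝ} (hp : 0 < p) (hq : 0 < q) (hp1 : p ≤ 1)
    (hq1 : q ≤ 1) : (p - q) ^ 2 / 2 ≤ p * log (p / q) - (p - q) := by
  set F : ℝ → ℝ := fun x => p * (log p - log x) - (p - x) - (p - x) ^ 2 / 2
  have hF : ∀ x, 0 < x → HasDerivAt F ((x - p) * (1 - x) / x) x :=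
    fun x hx => hasDerivAt_mul_log_div_sub_sub_sq hx
  have hcont : ∀ a b, 0 < a → ContinuousOn F (Icc a b) := fun a b ha x hx =>
    (hF x (ha.trans_le hx.1)).continuousAt.continuousWithinAt
  suffices F p ≤ F q by
    simp only [F, sub_self] at this
    rw [log_div hp.ne' hq.ne']
    linarith
  rcases le_total p q with hpq | hqp
  · refine monotoneOn_of_hasDerivWithinAt_nonneg (convex_Icc p q) (hcont p q hp)
      (fun x hx => (hF x ?_).hasDerivWithinAt) (fun x hx => ?_)
      (left_mem_Icc.2 hpq) (right_mem_Icc.2 hpq) hpq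
    all_goals rw [interior_Icc] at hx
    · exact hp.trans hx.1
    · exact div_nonneg (mul_nonneg (by linarith [hx.1]) (by linarith [hx.2])) (hp.trans hx.1).le
  · refine antitoneOn_of_hasDerivWithinAt_nonpos (convex_Icc q p) (hcont q p hq)
      (fun x hx => (hF x ?_).hasDerivWithinAt) (fun x hx => ?_)
      (left_mem_Icc.2 hqp) (right_mem_Icc.2 hqp) hqp
    all_goals rw [interior_Icc] at hx
    · exact hq.trans hx.1
    · exact div_nonpos_of_nonpos_of_nonneg
        (mul_nonpos_of_nonpos_of_nonneg (by linarith [hx.2]) (by linarith [hx.2])) (hq.trans hx.1).le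

lemma mul_log_div_sub_sub_le_sq_div {p q : ℝ} (hp : 0 < p) (hq : 0 < q) :
    p * log (p / q) - (p - q) ≤ (p - q) ^ 2 / q := by
  have hlog : p * log (p / q) ≤ p * (p / q - 1) :=
    mul_le_mul_of_nonneg_left (log_le_sub_one_of_pos (div_pos hp hq)) hp.le
  have hchi : p * (p / q - 1) - (p - q) = (p - q) ^ 2 / q := by
    field_simp
  linarith

section FiniteSums

variable {ι : Type*} [Fintype ι] {p q : ι → ℝ}

lemma sum_mul_log_div_eq_sum_sub_sub (h : ∑ i, p i = ∑ i, q i) :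
    ∑ i, p i * log (p i / q i) = ∑ i, (p i * log (p i / q i) - (p i - q i)) := by
  rw [Finset.sum_sub_distrib, Finset.sum_sub_distrib, h, sub_self, sub_zero]

lemma sq_sub_le_two_mul_sum_mul_log_div (hp : ∀ i, 0 < p i) (hq : ∀ i, 0 < q i)
    (hp1 : ∀ i, p i ≤ 1) (hq1 : ∀ i, q i ≤ 1) (h : ∑ i, p i = ∑ i, q i) (i : ι) :
    (p i - q i) ^ 2 ≤ 2 * ∑ j, p j * log (p j / q j) := by
  have hterm j := sq_sub_div_two_le_mul_log_div_sub_sub (hp j) (hq j) (hp1 j) (hq1 j)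
  have hsingle := Finset.single_le_sum (f := fun j => p j * log (p j / q j) - (p j - q j))
    (fun j _ => (hterm j).trans' (by positivity)) (Finset.mem_univ i)
  rw [sum_mul_log_div_eq_sum_sub_sub h]
  linarith [hterm i]

lemma sum_mul_log_div_le_sum_sq_div (hp : ∀ i, 0 < p i) (hq : ∀ i, 0 < q i)
    (h : ∑ i, p i = ∑ i, q i) :
    ∑ i, p i * log (p i / q i) ≤ ∑ i, (p i - q i) ^ 2 / q i := by
  rw [sum_mul_log_div_eq_sum_sub_sub h]
  exact Finset.sum_le_sum fun i _ => mul_log_div_sub_sub_le_sq_div (hp i) (hq i)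

end FiniteSums

lemma abs_sub_sub_nsmul_le {G : Type*} [AddGroup G] (f : G → ℝ) {s : G} {B : ℝ}
    (hB : ∀ z, |f z - f (z - s)| ≤ B) (k : ℕ) (y : G) : |f y - f (y - k • s)| ≤ k * B := by
  induction k generalizing y with
  | zero => simp
  | succ k ih =>
    have hy : y - (k + 1) • s = y - s - k • s := by
      simp only [succ_nsmul, sub_eq_add_neg, neg_add_rev, add_assoc]
    calc |f y - f (y - (k + 1) • s)|
        ≤ |f y - f (y - s)| + |f (y - s) - f (y - s - k • s)| := by
          rw [hy]; exact abs_sub_le _ _ _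
      _ ≤ B + k * B := add_le_add (hB y) (ih (y - s))
      _ = (k + 1 : ℕ) * B := by push_cast; ring

section Shift

variable {m : ℕ} [NeZero m] {P : ZMod m → ℝ}

lemma sq_sub_shift_le_two_mul_klShift (hpos : ∀ y, 0 < P y) (hsum : ∑ y, P y = 1)
    (l y : ZMod m) : (P y - P (y - l)) ^ 2 ≤ 2 * klShift P l := by
  have hle : ∀ y, P y ≤ 1 := fun y =>
    hsum ▸ Finset.single_le_sum (fun z _ => (hpos z).le) (Finset.mem_univ y)
  exact sq_sub_le_two_mul_sum_mul_log_div hpos (fun y => hpos _) hle (fun y => hle _)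
    (Equiv.sum_comp (Equiv.subRight l) P).symm y

lemma klShift_le_mul_sum_sq {c : ℝ} (hc : 0 < c) (hpos : ∀ y, 0 < P y)
    (hlow : ∀ y, c ≤ (m : ℝ) * P y) (l : ZMod m) :
    klShift P l ≤ m / c * ∑ y, (P y - P (y - l)) ^ 2 := by
  rw [Finset.mul_sum]
  refine (sum_mul_log_div_le_sum_sq_div hpos (fun y => hpos _)
    (Equiv.sum_comp (Equiv.subRight l) P).symm).trans (Finset.sum_le_sum fun y _ => ?_)
  rw [div_eq_mul_inv, mul_comm]
  refine mul_le_mul_of_nonneg_right ?_ (sq_nonneg _)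
  rw [inv_le_iff_one_le_mul₀ (hpos _), div_mul_eq_mul_div, one_le_div hc]
  exact hlow _

lemma klShift_le_of_forall_exists_nsmul_eq {c : ℝ} (hc : 0 < c) (hpos : ∀ y, 0 < P y)
    (hsum : ∑ y, P y = 1) (hlow : ∀ y, c ≤ (m : ℝ) * P y) {s : ZMod m}
    (hs : ∀ l : ZMod m, ∃ k ≤ m, k • s = l) (l : ZMod m) :
    klShift P l ≤ 2 * m ^ 4 / c * klShift P s := by
  set K := klShift P s
  have hstep z : |P z - P (z - s)| ≤ √(2 * K) :=
    Real.abs_le_sqrt (sq_sub_shift_le_two_mul_klShift hpos hsum s z)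
  have hK : 0 ≤ 2 * K := (sq_nonneg _).trans (sq_sub_shift_le_two_mul_klShift hpos hsum s 0)
  have hsq y : (P y - P (y - l)) ^ 2 ≤ m ^ 2 * (2 * K) := by
    obtain ⟨k, hk, rfl⟩ := hs l
    calc (P y - P (y - k • s)) ^ 2 = |P y - P (y - k • s)| ^ 2 := (sq_abs _).symm
      _ ≤ (m * √(2 * K)) ^ 2 := by
        gcongr
        exact (abs_sub_sub_nsmul_le P hstep k y).trans (by gcongr)
      _ = m ^ 2 * (2 * K) := by rw [mul_pow, sq_sqrt hK]
  calc klShift P l ≤ m / c * ∑ y, (P y - P (y - l)) ^ 2 := klShift_le_mul_sum_sq hc hpos hlow l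
    _ ≤ m / c * ∑ _y : ZMod m, m ^ 2 * (2 * K) := by gcongr with y; exact hsq y
    _ = 2 * m ^ 4 / c * K := by
      rw [Finset.sum_const, Finset.card_univ, ZMod.card, nsmul_eq_mul]
      ring

end Shift

theorem kl_max_le_const_mul_min_of_adjacent_min_general
    (m : ℕ) [NeZero m] (c : ℝ) (hc : 0 < c) :
    ∃ C : ℝ, 0 < C ∧
      ∀ P₀ : ZMod m → ℝ,
        (∀ y, 0 < P₀ y) → (∑ y, P₀ y = 1) → (∀ y, c ≤ (m : ℝ) * P₀ y) →
        ((∀ l : ZMod m, l ≠ 0 → klShift P₀ 1 ≤ klShift P₀ l) ∨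
         (∀ l : ZMod m, l ≠ 0 → klShift P₀ (-1) ≤ klShift P₀ l)) →
        ∀ l l' : ZMod m, l ≠ 0 → l' ≠ 0 → klShift P₀ l ≤ C * klShift P₀ l' := by
  have hm_pos : (0 : ℝ) < m := by exact_mod_cast NeZero.pos m
  refine ⟨2 * m ^ 4 / c, by positivity, fun P₀ hpos hsum hlow hmin l l' _ hl' => ?_⟩
  obtain ⟨s, hs, hmin⟩ : ∃ s : ZMod m, (∀ l : ZMod m, ∃ k ≤ m, k • s = l) ∧
      ∀ l : ZMod m, l ≠ 0 → klShift P₀ s ≤ klShift P₀ l := by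
    rcases hmin with hmin | hmin
    · exact ⟨1, fun l => ⟨l.val, l.val_lt.le, by simp⟩, hmin⟩
    · exact ⟨-1, fun l => ⟨(-l).val, (-l).val_lt.le, by simp⟩, hmin⟩
  exact (klShift_le_of_forall_exists_nsmul_eq hc hpos hsum hlow hs l).trans
    (mul_le_mul_of_nonneg_left (hmin l' hl') (by positivity))

/-- Lemma 1(1): for fixed `m` and pmfs `P₀` on `Z/mZ` with `m·min_y P₀(y)`
bounded below by `c > 0`, if the minimum of `l ↦ KL(P₀‖Pₗ)` over `l ≠ 0` is
attained at `l = 1` or `l = m − 1`, then the maximum is at most a constant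
(depending only on `m` and `c`) times the minimum. -/
theorem kl_max_le_const_mul_min_of_adjacent_min
    (m : ℕ) [NeZero m] (hm : 2 ≤ m) (c : ℝ) (hc : 0 < c) :
    ∃ C : ℝ, 0 < C ∧
      ∀ P₀ : ZMod m → ℝ,
        (∀ y, 0 < P₀ y) → (∑ y, P₀ y = 1) → (∀ y, c ≤ (m : ℝ) * P₀ y) →
        ((∀ l : ZMod m, l ≠ 0 → klShift P₀ 1 ≤ klShift P₀ l) ∨
         (∀ l : ZMod m, l ≠ 0 → klShift P₀ (-1) ≤ klShift P₀ l)) →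
        ∀ l l' : ZMod m, l ≠ 0 → l' ≠ 0 → klShift P₀ l ≤ C * klShift P₀ l' :=
  kl_max_le_const_mul_min_of_adjacent_min_general m c hc
end

section
/- Fix m ≥ 2 and let P₀ be a probability distribution on {0,…,m−1} with m·min_y P₀(y) bounded below by a positive constant, which is unimodal in the sense P₀(0) ≥ P₀(1) ≥ … ≥ P₀(⌊m/2⌋) and symmetric: P₀(y) = P₀(m−y) for 1 ≤ y < m. With Pₗ(y) := P₀(y − l mod m), one has KL(P₀‖Pₗ) ≥ (1/2)·|P₀(0) − P₀(⌊m/2⌋)|² for every 1 ≤ l < m, and hence max_{1 ≤ l < m} KL(P₀‖Pₗ) ≤ C · min_{1 ≤ l < m} KL(P₀‖Pₗ) for a constant C depending only on m and the lower bound on P₀. -/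
open Finset Real

lemma sq_sqrt_sub_sqrt_add_sub_le_mul_log_div {p q : ℝ} (hp : 0 < p) (hq : 0 < q) :
    (√p - √q) ^ 2 + (p - q) ≤ p * log (p / q) := by
  have hsp : 0 < √p := sqrt_pos.2 hp
  have hlog : log (p / q) = -2 * log (√q / √p) := by
    rw [← sqrt_div' q hp.le, log_sqrt (div_pos hq hp).le, log_div hq.ne' hp.ne',
      log_div hp.ne' hq.ne']
    ring
  have hle : log (√q / √p) ≤ √q / √p - 1 := log_le_sub_one_of_pos (by positivity)
  have hmul : p * (√q / √p) = √p * √q := by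
    rw [mul_div_assoc', div_eq_iff hsp.ne']
    linear_combination (-√q) * sq_sqrt hp.le
  nlinarith [mul_le_mul_of_nonneg_left hle hp.le, sq_sqrt hp.le, sq_sqrt hq.le]

lemma mul_log_div_le_sq_sub_div_add_sub {p q : ℝ} (hp : 0 < p) (hq : 0 < q) :
    p * log (p / q) ≤ (p - q) ^ 2 / q + (p - q) := by
  have h : p * log (p / q) ≤ p * (p / q - 1) :=
    mul_le_mul_of_nonneg_left (log_le_sub_one_of_pos (div_pos hp hq)) hp.le
  have : p * (p / q - 1) = (p - q) ^ 2 / q + (p - q) := by field_simp; ring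
  linarith

noncomputable def klSum {ι : Type*} [Fintype ι] (p q : ι → ℝ) : ℝ :=
  ∑ i, p i * log (p i / q i)

section FiniteDistributions

variable {ι : Type*} [Fintype ι] {p q : ι → ℝ}

lemma sum_sq_sqrt_sub_sqrt_le_klSum (hp : ∀ i, 0 < p i) (hq : ∀ i, 0 < q i)
    (hp₁ : ∑ i, p i = 1) (hq₁ : ∑ i, q i = 1) :
    ∑ i, (√(p i) - √(q i)) ^ 2 ≤ klSum p q := by
  have h := sum_le_sum fun i (_ : i ∈ univ) =>
    sq_sqrt_sub_sqrt_add_sub_le_mul_log_div (hp i) (hq i)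
  rwa [sum_add_distrib, sum_sub_distrib, hp₁, hq₁, sub_self, add_zero] at h

lemma sq_sum_abs_sub_le_four_mul_klSum (hp : ∀ i, 0 < p i) (hq : ∀ i, 0 < q i)
    (hp₁ : ∑ i, p i = 1) (hq₁ : ∑ i, q i = 1) :
    (∑ i, |p i - q i|) ^ 2 ≤ 4 * klSum p q := by
  have hfactor : ∀ i, |p i - q i| = |√(p i) - √(q i)| * (√(p i) + √(q i)) := fun i => by
    rw [← abs_of_nonneg (by positivity : 0 ≤ √(p i) + √(q i)), ← abs_mul]
    congr 1
    linear_combination sq_sqrt (hq i).le - sq_sqrt (hp i).le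
  have hsum : ∑ i, (√(p i) + √(q i)) ^ 2 ≤ 4 := calc
    ∑ i, (√(p i) + √(q i)) ^ 2 ≤ ∑ i, 2 * (p i + q i) := sum_le_sum fun i _ => by
      simpa only [sq_sqrt (hp i).le, sq_sqrt (hq i).le] using add_sq_le (a := √(p i)) (b := √(q i))
    _ = 4 := by rw [← mul_sum, sum_add_distrib, hp₁, hq₁]; norm_num
  calc (∑ i, |p i - q i|) ^ 2
      ≤ (∑ i, |√(p i) - √(q i)| ^ 2) * ∑ i, (√(p i) + √(q i)) ^ 2 := by
        simp only [hfactor]; exact sum_mul_sq_le_sq_mul_sq _ _ _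
    _ ≤ klSum p q * 4 := by
        simp only [sq_abs]
        exact mul_le_mul (sum_sq_sqrt_sub_sqrt_le_klSum hp hq hp₁ hq₁) hsum
          (sum_nonneg fun i _ => sq_nonneg _)
          ((sum_nonneg fun i _ => sq_nonneg _).trans (sum_sq_sqrt_sub_sqrt_le_klSum hp hq hp₁ hq₁))
    _ = 4 * klSum p q := mul_comm _ _

lemma klSum_le_sum_sq_sub_div (hp : ∀ i, 0 < p i) (hq : ∀ i, 0 < q i)
    (hp₁ : ∑ i, p i = 1) (hq₁ : ∑ i, q i = 1) :
    klSum p q ≤ ∑ i, (p i - q i) ^ 2 / q i := by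
  have h := sum_le_sum fun i (_ : i ∈ univ) => mul_log_div_le_sq_sub_div_add_sub (hp i) (hq i)
  rwa [sum_add_distrib, sum_sub_distrib, hp₁, hq₁, sub_self, add_zero] at h

lemma klSum_le_card_mul_sq_div (hp : ∀ i, 0 < p i) (hq : ∀ i, 0 < q i)
    (hp₁ : ∑ i, p i = 1) (hq₁ : ∑ i, q i = 1) {δ ε : ℝ} (hε : 0 < ε) (hqε : ∀ i, ε ≤ q i)
    (hδ : ∀ i, |p i - q i| ≤ δ) :
    klSum p q ≤ Fintype.card ι * (δ ^ 2 / ε) := calc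
  klSum p q ≤ ∑ i, (p i - q i) ^ 2 / q i := klSum_le_sum_sq_sub_div hp hq hp₁ hq₁
  _ ≤ ∑ _i : ι, δ ^ 2 / ε := sum_le_sum fun i _ => by
    rw [← sq_abs]
    exact div_le_div₀ (sq_nonneg δ) (pow_le_pow_left₀ (abs_nonneg _) (hδ i) 2) hε (hqε i)
  _ = Fintype.card ι * (δ ^ 2 / ε) := by rw [sum_const, card_univ, nsmul_eq_mul]

end FiniteDistributions

/-- Layer-cake decomposition of a nonincreasing sequence into the indicators of `{a | a ≤ k}`,
which for fixed `a`, `b` all change in the same direction. -/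
lemma abs_sub_eq_sum_mul_abs_ite_sub_ite {v : ℕ → ℝ} {M : ℕ} (hv : ∀ k < M, v (k + 1) ≤ v k)
    {a b : ℕ} (ha : a ≤ M) (hb : b ≤ M) :
    |v a - v b| = ∑ k ∈ range M,
      (v k - v (k + 1)) * |(if a ≤ k then 1 else 0 : ℝ) - if b ≤ k then 1 else 0| := by
  wlog hab : a ≤ b generalizing a b
  · rw [abs_sub_comm, this hb ha (le_of_not_ge hab)]
    simp only [abs_sub_comm]
  have hind : ∀ k, |(if a ≤ k then 1 else 0 : ℝ) - if b ≤ k then 1 else 0| =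
      if k ∈ Ico a b then 1 else 0 := fun k => by
    simp only [mem_Ico]
    split_ifs <;> norm_num <;> omega
  have hIco : range M ∩ Ico a b = Ico a b :=
    inter_eq_right.2 fun k hk => mem_range.2 ((mem_Ico.1 hk).2.trans_le hb)
  have htel : ∑ k ∈ Ico a b, (v k - v (k + 1)) = v a - v b := by
    rw [← neg_sub, ← sum_Ico_sub v hab, ← sum_neg_distrib]; simp only [neg_sub]
  rw [abs_of_nonneg (htel ▸ sum_nonneg fun k hk => sub_nonneg.2 (hv k
    ((mem_Ico.1 hk).2.trans_le hb))), ← htel]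
  simp only [hind, mul_ite, mul_one, mul_zero, sum_ite_mem, hIco]

lemma two_mul_abs_le_sum_abs_of_sum_eq_zero {ι : Type*} [Fintype ι] {f : ι → ℝ}
    (hf : ∑ i, f i = 0) (a : ι) : 2 * |f a| ≤ ∑ i, |f i| := by
  classical
  have hrest : ∑ i ∈ univ.erase a, f i = -f a := by
    rw [← add_sum_erase _ _ (mem_univ a)] at hf; linarith
  calc 2 * |f a| = |f a| + |∑ i ∈ univ.erase a, f i| := by rw [hrest, abs_neg]; ring
    _ ≤ |f a| + ∑ i ∈ univ.erase a, |f i| := by gcongr; exact abs_sum_le_sum_abs _ _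
    _ = ∑ i, |f i| := add_sum_erase _ (fun i => |f i|) (mem_univ a)

lemma two_le_sum_abs_ite_sub_ite_sub {G : Type*} [AddCommGroup G] [Fintype G]
    (s : G → Prop) [DecidablePred s] {l y : G} (hy : ¬(s y ↔ s (y - l))) :
    2 ≤ ∑ x, |(if s x then 1 else 0 : ℝ) - if s (x - l) then 1 else 0| := by
  have hsum : ∑ x, ((if s x then 1 else 0 : ℝ) - if s (x - l) then 1 else 0) = 0 := by
    rw [sum_sub_distrib, sub_eq_zero]
    exact (Fintype.sum_equiv (Equiv.subRight l) _ _ fun _ => rfl).symm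
  have hy' : |(if s y then 1 else 0 : ℝ) - if s (y - l) then 1 else 0| = 1 := by
    by_cases h : s y <;> simp_all
  simpa [hy'] using two_mul_abs_le_sum_abs_of_sum_eq_zero hsum y

namespace ZMod

variable {m : ℕ} [NeZero m]

lemma natAbs_valMinAbs_natCast_of_le {a : ℕ} (ha : a ≤ m) :
    (a : ZMod m).valMinAbs.natAbs = min a (m - a) := by
  rcases ha.lt_or_eq with ha | rfl
  · rw [valMinAbs_natAbs_eq_min, val_natCast_of_lt ha]
  · simp

lemma exists_not_iff_natAbs_valMinAbs_add_le {L k : ℕ} (hL : 0 < L) (hLm : L ≤ m / 2)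
    (hk : k + 1 ≤ m / 2) :
    ∃ a : ℕ,
      ¬((a : ZMod m).valMinAbs.natAbs ≤ k ↔ ((a + L : ℕ) : ZMod m).valMinAbs.natAbs ≤ k) := by
  have hm := Nat.div_mul_le_self m 2
  -- The ball of radius `k` is `[-k, k]`: either `k + L` has left it, or `k + 1 + L` has
  -- wrapped around into it.
  by_cases h : 2 * k + L < m
  · refine ⟨k, ?_⟩
    rw [natAbs_valMinAbs_natCast_of_le (by omega), natAbs_valMinAbs_natCast_of_le (by omega)]
    omega
  · refine ⟨k + 1, ?_⟩
    rw [natAbs_valMinAbs_natCast_of_le (by omega), natAbs_valMinAbs_natCast_of_le (by omega)]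
    omega

lemma exists_not_iff_natAbs_valMinAbs_sub_le {l : ZMod m} (hl : l ≠ 0) {k : ℕ}
    (hk : k + 1 ≤ m / 2) :
    ∃ y : ZMod m, ¬(y.valMinAbs.natAbs ≤ k ↔ (y - l).valMinAbs.natAbs ≤ k) := by
  obtain ⟨a, ha⟩ := exists_not_iff_natAbs_valMinAbs_add_le (m := m)
    (Int.natAbs_pos.2 ((valMinAbs_eq_zero l).not.2 hl)) (natAbs_valMinAbs_le l) hk
  have hL := natCast_natAbs_valMinAbs l
  split_ifs at hL
  · rw [Nat.cast_add, hL] at ha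
    exact ⟨a + l, by rwa [add_sub_cancel_right, iff_comm]⟩
  · exact ⟨a, by rwa [sub_eq_add_neg, ← hL, ← Nat.cast_add]⟩

lemma two_mul_sub_le_sum_abs_sub_comp_natAbs_valMinAbs {v : ℕ → ℝ}
    (hv : ∀ k < m / 2, v (k + 1) ≤ v k) {l : ZMod m} (hl : l ≠ 0) :
    2 * (v 0 - v (m / 2)) ≤
      ∑ y : ZMod m, |v y.valMinAbs.natAbs - v (y - l).valMinAbs.natAbs| := by
  calc 2 * (v 0 - v (m / 2)) = ∑ k ∈ range (m / 2), (v k - v (k + 1)) * 2 := by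
        rw [← sum_mul, sum_range_sub', mul_comm]
    _ ≤ ∑ k ∈ range (m / 2), (v k - v (k + 1)) * ∑ y : ZMod m,
          |(if y.valMinAbs.natAbs ≤ k then 1 else 0 : ℝ) -
            if (y - l).valMinAbs.natAbs ≤ k then 1 else 0| := by
        gcongr with k hk
        · exact sub_nonneg.2 (hv k (mem_range.1 hk))
        · obtain ⟨y, hy⟩ := exists_not_iff_natAbs_valMinAbs_sub_le hl (mem_range.1 hk)
          exact two_le_sum_abs_ite_sub_ite_sub (fun y : ZMod m => y.valMinAbs.natAbs ≤ k) hy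
    _ = ∑ y : ZMod m, |v y.valMinAbs.natAbs - v (y - l).valMinAbs.natAbs| := by
        simp only [mul_sum]
        rw [sum_comm]
        refine sum_congr rfl fun y _ => ?_
        rw [abs_sub_eq_sum_mul_abs_ite_sub_ite hv (natAbs_valMinAbs_le _) (natAbs_valMinAbs_le _)]

lemma apply_eq_apply_natAbs_valMinAbs {α : Type*} {f : ZMod m → α} (hf : ∀ y, f (-y) = f y)
    (y : ZMod m) : f y = f (y.valMinAbs.natAbs : ZMod m) := by
  rw [natCast_natAbs_valMinAbs]
  split_ifs
  · rfl
  · rw [hf]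

end ZMod

section UnimodalOnZMod

variable {m : ℕ} [NeZero m] {P : ZMod m → ℝ}

lemma apply_mem_Icc_of_unimodal
    (hmono : ∀ k < m / 2, P ((k + 1 : ℕ) : ZMod m) ≤ P ((k : ℕ) : ZMod m))
    (hsym : ∀ y, P (-y) = P y) (y : ZMod m) :
    P y ∈ Set.Icc (P ((m / 2 : ℕ) : ZMod m)) (P 0) := by
  have hanti : AntitoneOn (fun k : ℕ => P k) (Set.Iic (m / 2)) :=
    antitoneOn_of_succ_le Set.ordConnected_Iic fun k _ _ hk => hmono k hk
  have hy : y.valMinAbs.natAbs ∈ Set.Iic (m / 2) := ZMod.natAbs_valMinAbs_le y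
  rw [ZMod.apply_eq_apply_natAbs_valMinAbs hsym y]
  exact ⟨hanti hy Set.self_mem_Iic hy, by
    simpa using hanti (Set.mem_Iic.2 (Nat.zero_le _)) hy (Nat.zero_le _)⟩

lemma sum_apply_sub_eq_one (hsum : ∑ y, P y = 1) (l : ZMod m) : ∑ y, P (y - l) = 1 :=
  ((Equiv.subRight l).sum_comp P).trans hsum

lemma sq_sub_le_klShift (hpos : ∀ y, 0 < P y) (hsum : ∑ y, P y = 1)
    (hmono : ∀ k < m / 2, P ((k + 1 : ℕ) : ZMod m) ≤ P ((k : ℕ) : ZMod m))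
    (hsym : ∀ y, P (-y) = P y) {l : ZMod m} (hl : l ≠ 0) :
    (P 0 - P ((m / 2 : ℕ) : ZMod m)) ^ 2 ≤ klShift P l := by
  have hΔ := (apply_mem_Icc_of_unimodal hmono hsym 0).1
  have htv := ZMod.two_mul_sub_le_sum_abs_sub_comp_natAbs_valMinAbs
    (v := fun k : ℕ => P k) hmono hl
  simp only [← ZMod.apply_eq_apply_natAbs_valMinAbs hsym, Nat.cast_zero] at htv
  have hpinsker := sq_sum_abs_sub_le_four_mul_klSum hpos (fun y => hpos (y - l)) hsum
    (sum_apply_sub_eq_one hsum l)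
  have hsq : (2 * (P 0 - P ((m / 2 : ℕ) : ZMod m))) ^ 2 ≤ (∑ y, |P y - P (y - l)|) ^ 2 :=
    pow_le_pow_left₀ (by linarith) htv 2
  change _ ≤ klSum P fun y => P (y - l)
  nlinarith

lemma klShift_le_sq_sub (hpos : ∀ y, 0 < P y) (hsum : ∑ y, P y = 1) {c : ℝ} (hc : 0 < c)
    (hlb : ∀ y, c ≤ (m : ℝ) * P y)
    (hmono : ∀ k < m / 2, P ((k + 1 : ℕ) : ZMod m) ≤ P ((k : ℕ) : ZMod m))
    (hsym : ∀ y, P (-y) = P y) (l : ZMod m) :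
    klShift P l ≤ (m : ℝ) ^ 2 / c * (P 0 - P ((m / 2 : ℕ) : ZMod m)) ^ 2 := by
  have hm : (0 : ℝ) < m := Nat.cast_pos.2 (NeZero.pos m)
  have hbounds := apply_mem_Icc_of_unimodal hmono hsym
  have h := klSum_le_card_mul_sq_div hpos (fun y => hpos (y - l)) hsum
    (sum_apply_sub_eq_one hsum l) (div_pos hc hm)
    (fun y => (div_le_iff₀' hm).2 (hlb (y - l)))
    (δ := P 0 - P ((m / 2 : ℕ) : ZMod m)) fun y => abs_sub_le_iff.2
      ⟨by linarith [(hbounds y).2, (hbounds (y - l)).1],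
        by linarith [(hbounds y).1, (hbounds (y - l)).2]⟩
  rw [ZMod.card] at h
  refine h.trans_eq ?_
  rw [div_div_eq_mul_div]
  ring

end UnimodalOnZMod

theorem kl_comparable_of_unimodal_general
    (m : ℕ) [NeZero m] (c : ℝ) (hc : 0 < c) :
    ∃ C : ℝ, 0 < C ∧
      ∀ P₀ : ZMod m → ℝ,
        (∀ y, 0 < P₀ y) → (∑ y, P₀ y = 1) → (∀ y, c ≤ (m : ℝ) * P₀ y) →
        (∀ k : ℕ, k + 1 ≤ m / 2 → P₀ ((k + 1 : ℕ) : ZMod m) ≤ P₀ ((k : ℕ) : ZMod m)) →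
        (∀ y : ZMod m, P₀ (-y) = P₀ y) →
        ((∀ l : ZMod m, l ≠ 0 →
            (1 / 2) * |P₀ 0 - P₀ ((m / 2 : ℕ) : ZMod m)| ^ 2 ≤ klShift P₀ l) ∧
         ∀ l l' : ZMod m, l ≠ 0 → l' ≠ 0 → klShift P₀ l ≤ C * klShift P₀ l') := by
  refine ⟨(m : ℝ) ^ 2 / c, div_pos (pow_pos (Nat.cast_pos.2 (NeZero.pos m)) 2) hc,
    fun P hpos hsum hlb hmono hsym => ⟨fun l hl => ?_, fun l l' _ hl' => ?_⟩⟩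
  · rw [sq_abs]
    nlinarith [sq_sub_le_klShift hpos hsum hmono hsym hl,
      sq_nonneg (P 0 - P ((m / 2 : ℕ) : ZMod m))]
  · calc klShift P l ≤ (m : ℝ) ^ 2 / c * (P 0 - P ((m / 2 : ℕ) : ZMod m)) ^ 2 :=
          klShift_le_sq_sub hpos hsum hc hlb hmono hsym l
      _ ≤ (m : ℝ) ^ 2 / c * klShift P l' := by
          gcongr
          exact sq_sub_le_klShift hpos hsum hmono hsym hl'

/-- Lemma 1(2): for a symmetric unimodal pmf `P₀` on `Z/mZ` with
`m·min_y P₀(y)` bounded below by `c > 0`, every shifted KL divergence is at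
least `½ |P₀(0) − P₀(⌊m/2⌋)|²`, and consequently the maximal KL divergence is
at most a constant (depending only on `m` and `c`) times the minimal one. -/
theorem kl_comparable_of_unimodal
    (m : ℕ) [NeZero m] (hm : 2 ≤ m) (c : ℝ) (hc : 0 < c) :
    ∃ C : ℝ, 0 < C ∧
      ∀ P₀ : ZMod m → ℝ,
        (∀ y, 0 < P₀ y) → (∑ y, P₀ y = 1) → (∀ y, c ≤ (m : ℝ) * P₀ y) →
        (∀ k : ℕ, k + 1 ≤ m / 2 → P₀ ((k + 1 : ℕ) : ZMod m) ≤ P₀ ((k : ℕ) : ZMod m)) →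
        (∀ y : ZMod m, P₀ (-y) = P₀ y) →
        ((∀ l : ZMod m, l ≠ 0 →
            (1 / 2) * |P₀ 0 - P₀ ((m / 2 : ℕ) : ZMod m)| ^ 2 ≤ klShift P₀ l) ∧
         ∀ l l' : ZMod m, l ≠ 0 → l' ≠ 0 → klShift P₀ l ≤ C * klShift P₀ l') :=
  kl_comparable_of_unimodal_general m c hc
end
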